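/- For any integer a, the diffeomorphism F_a of ℝ × ℝ × ℝ × ℝ² defined in Cartesian coordinates by F_a(p, q, t, (x, y)) = (p − a(x² + y²), q, t, R_{aq}(x, y)), where R_θ denotes rotation of ℝ² by angle θ, pulls back the 1-form p dq + dt + x dy − y dx to itself. Equivalently, for every smooth curve γ(s) = (p(s), q(s), t(s), x(s), y(s)), the value of the 1-form p dq + dt + x dy − y dx on the velocity of F_a ∘ γ equals its value on the velocity of γ. -/
import Mathlib

/-- The map F_a(p, q, t, (x, y)) = (p − a(x²+y²), q, t, R_{aq}(x,y)) preserves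
the contact form p dq + dt + x dy − y dx, verified pointwise on tangent
vectors: for each point (p,q,t,x,y) and tangent vector (vp,vq,vt,vx,vy), the
form at the image point evaluated on the image of the tangent vector under the
differential of F_a equals p·vq + vt + x·vy − y·vx. -/
theorem stmt7 (a : ℤ) (p q t x y vp vq vt vx vy : ℝ) :
    -- image point coordinates
    let p' : ℝ := p - (a : ℝ) * (x^2 + y^2)
    let x' : ℝ := Real.cos ((a : ℝ) * q) * x - Real.sin ((a : ℝ) * q) * y
    let y' : ℝ := Real.sin ((a : ℝ) * q) * x + Real.cos ((a : ℝ) * q) * y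
    -- image tangent vector (differential of F_a applied to (vp,vq,vt,vx,vy))
    let dx' : ℝ := Real.cos ((a : ℝ) * q) * vx - Real.sin ((a : ℝ) * q) * vy
      + (a : ℝ) * vq * (-(Real.sin ((a : ℝ) * q)) * x - Real.cos ((a : ℝ) * q) * y)
    let dy' : ℝ := Real.sin ((a : ℝ) * q) * vx + Real.cos ((a : ℝ) * q) * vy
      + (a : ℝ) * vq * (Real.cos ((a : ℝ) * q) * x - Real.sin ((a : ℝ) * q) * y)
    -- the form p dq + dt + x dy − y dx is preserved
    p' * vq + vt + x' * dy' - y' * dx' = p * vq + vt + x * vy - y * vx := by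
  have h := Real.sin_sq_add_cos_sq ((a : ℝ) * q)
  simp only []
  linear_combination (x * vy - y * vx + (a : ℝ) * vq * (x ^ 2 + y ^ 2)) * h
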